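/- Let c > 0 and V ∈ ℝ with |V| < c, and set γ = (1 − V²/c²)^(−1/2). Let E, B : ℝ³ × ℝ → ℝ³ be continuously differentiable and satisfy the homogeneous Maxwell equations ∇·B = 0 and ∇×E + ∂ₜB = 0 at every point of ℝ³ × ℝ. Define the boosted fields E', B' : ℝ³ × ℝ → ℝ³ by E'(x', y', z', t') = (E_x, γ(E_y − V·B_z), γ(E_z + V·B_y)) and B'(x', y', z', t') = (B_x, γ(B_y + c⁻²V·E_z), γ(B_z − c⁻²V·E_y)), where all unprimed fields on the right-hand sides are evaluated at (x, y, z, t) = (γ(x' + Vt'), y', z', γ(t' + c⁻²Vx')). Then ∇·B' = 0 and ∇×E' + ∂ₜB' = 0 at every point of ℝ³ × ℝ (divergence, curl and time derivative taken in the primed coordinates). -/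

import Mathlib

noncomputable section

abbrev Vec3 : Type := ℝ × ℝ × ℝ
abbrev Pt4 : Type := ℝ × ℝ × ℝ × ℝ

/-- Partial derivative with respect to the first spatial variable `x`. -/
def pdx (f : Pt4 → ℝ) (p : Pt4) : ℝ := deriv (fun u => f (u, p.2.1, p.2.2.1, p.2.2.2)) p.1

/-- Partial derivative with respect to the second spatial variable `y`. -/
def pdy (f : Pt4 → ℝ) (p : Pt4) : ℝ := deriv (fun u => f (p.1, u, p.2.2.1, p.2.2.2)) p.2.1

/-- Partial derivative with respect to the third spatial variable `z`. -/
def pdz (f : Pt4 → ℝ) (p : Pt4) : ℝ := deriv (fun u => f (p.1, p.2.1, u, p.2.2.2)) p.2.2.1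

/-- Partial derivative with respect to the time variable `t`. -/
def pdt (f : Pt4 → ℝ) (p : Pt4) : ℝ := deriv (fun u => f (p.1, p.2.1, p.2.2.1, u)) p.2.2.2

def comp1 (F : Pt4 → Vec3) : Pt4 → ℝ := fun p => (F p).1
def comp2 (F : Pt4 → Vec3) : Pt4 → ℝ := fun p => (F p).2.1
def comp3 (F : Pt4 → Vec3) : Pt4 → ℝ := fun p => (F p).2.2

/-- Spatial divergence of a time-dependent vector field. -/
def vdiv (F : Pt4 → Vec3) (p : Pt4) : ℝ :=
  pdx (comp1 F) p + pdy (comp2 F) p + pdz (comp3 F) p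

/-- Spatial curl of a time-dependent vector field. -/
def vcurl (F : Pt4 → Vec3) (p : Pt4) : Vec3 :=
  (pdy (comp3 F) p - pdz (comp2 F) p,
   pdz (comp1 F) p - pdx (comp3 F) p,
   pdx (comp2 F) p - pdy (comp1 F) p)

/-- Time derivative of a time-dependent vector field. -/
def vdt (F : Pt4 → Vec3) (p : Pt4) : Vec3 :=
  (pdt (comp1 F) p, pdt (comp2 F) p, pdt (comp3 F) p)

/-- The Lorentz factor `γ = (1 − V²/c²)^(−1/2)`. -/
def lorγ (c V : ℝ) : ℝ := 1 / Real.sqrt (1 - V ^ 2 / c ^ 2)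

/-- The inverse of the standard Lorentz transformation with velocity `V` along
the `x`-axis: `(x',y',z',t') ↦ (γ(x'+Vt'), y', z', γ(t'+c⁻²Vx'))`. -/
def Linv (c V : ℝ) (p : Pt4) : Pt4 :=
  (lorγ c V * (p.1 + V * p.2.2.2), p.2.1, p.2.2.1,
   lorγ c V * (p.2.2.2 + c⁻¹ ^ 2 * V * p.1))

/-- The boosted electric field
`E' = (E_x, γ(E_y − V·B_z), γ(E_z + V·B_y))`, the unprimed fields being
evaluated at the inverse-Lorentz-transformed point. -/
def Eboost (c V : ℝ) (E B : Pt4 → Vec3) (p : Pt4) : Vec3 :=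
  ((E (Linv c V p)).1,
   lorγ c V * ((E (Linv c V p)).2.1 - V * (B (Linv c V p)).2.2),
   lorγ c V * ((E (Linv c V p)).2.2 + V * (B (Linv c V p)).2.1))

/-- The boosted magnetic field
`B' = (B_x, γ(B_y + c⁻²V·E_z), γ(B_z − c⁻²V·E_y))`, the unprimed fields being
evaluated at the inverse-Lorentz-transformed point. -/
def Bboost (c V : ℝ) (E B : Pt4 → Vec3) (p : Pt4) : Vec3 :=
  ((B (Linv c V p)).1,
   lorγ c V * ((B (Linv c V p)).2.1 + c⁻¹ ^ 2 * V * (E (Linv c V p)).2.2),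
   lorγ c V * ((B (Linv c V p)).2.2 - c⁻¹ ^ 2 * V * (E (Linv c V p)).2.1))

section AuxLemmas

lemma pdx_fderiv {f : Pt4 → ℝ} {p : Pt4} (hf : DifferentiableAt ℝ f p) :
    pdx f p = fderiv ℝ f p (1, 0, 0, 0) := by
  have hline : HasDerivAt (fun u : ℝ => ((u, p.2.1, p.2.2.1, p.2.2.2) : Pt4))
      ((1:ℝ), (0:ℝ), (0:ℝ), (0:ℝ)) p.1 :=
    (hasDerivAt_id _).prodMk ((hasDerivAt_const _ _).prodMk
      ((hasDerivAt_const _ _).prodMk (hasDerivAt_const _ _)))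
  simpa [pdx, Function.comp_def] using (hf.hasFDerivAt.comp_hasDerivAt p.1 hline).deriv

lemma pdy_fderiv {f : Pt4 → ℝ} {p : Pt4} (hf : DifferentiableAt ℝ f p) :
    pdy f p = fderiv ℝ f p (0, 1, 0, 0) := by
  have hline : HasDerivAt (fun u : ℝ => ((p.1, u, p.2.2.1, p.2.2.2) : Pt4))
      ((0:ℝ), (1:ℝ), (0:ℝ), (0:ℝ)) p.2.1 :=
    (hasDerivAt_const _ _).prodMk ((hasDerivAt_id _).prodMk
      ((hasDerivAt_const _ _).prodMk (hasDerivAt_const _ _)))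
  simpa [pdy, Function.comp_def] using (hf.hasFDerivAt.comp_hasDerivAt p.2.1 hline).deriv

lemma pdz_fderiv {f : Pt4 → ℝ} {p : Pt4} (hf : DifferentiableAt ℝ f p) :
    pdz f p = fderiv ℝ f p (0, 0, 1, 0) := by
  have hline : HasDerivAt (fun u : ℝ => ((p.1, p.2.1, u, p.2.2.2) : Pt4))
      ((0:ℝ), (0:ℝ), (1:ℝ), (0:ℝ)) p.2.2.1 :=
    (hasDerivAt_const _ _).prodMk ((hasDerivAt_const _ _).prodMk
      ((hasDerivAt_id _).prodMk (hasDerivAt_const _ _)))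
  simpa [pdz, Function.comp_def] using (hf.hasFDerivAt.comp_hasDerivAt p.2.2.1 hline).deriv

lemma pdt_fderiv {f : Pt4 → ℝ} {p : Pt4} (hf : DifferentiableAt ℝ f p) :
    pdt f p = fderiv ℝ f p (0, 0, 0, 1) := by
  have hline : HasDerivAt (fun u : ℝ => ((p.1, p.2.1, p.2.2.1, u) : Pt4))
      ((0:ℝ), (0:ℝ), (0:ℝ), (1:ℝ)) p.2.2.2 :=
    (hasDerivAt_const _ _).prodMk ((hasDerivAt_const _ _).prodMk
      ((hasDerivAt_const _ _).prodMk (hasDerivAt_id _)))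
  simpa [pdt, Function.comp_def] using (hf.hasFDerivAt.comp_hasDerivAt p.2.2.2 hline).deriv


lemma fderiv_vec (L : Pt4 →L[ℝ] ℝ) (a b : ℝ) :
    L (a, 0, 0, b) = a * L (1, 0, 0, 0) + b * L (0, 0, 0, 1) := by
  have h : ((a, 0, 0, b) : Pt4)
      = a • ((1:ℝ), (0:ℝ), (0:ℝ), (0:ℝ)) + b • ((0:ℝ), (0:ℝ), (0:ℝ), (1:ℝ)) := by
    simp [Prod.ext_iff]
  rw [h, map_add, map_smul, map_smul, smul_eq_mul, smul_eq_mul]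

lemma pdx_comp (c V : ℝ) (f : Pt4 → ℝ) (p : Pt4)
    (hf : DifferentiableAt ℝ f (Linv c V p)) :
    pdx (fun r => f (Linv c V r)) p =
      lorγ c V * pdx f (Linv c V p)
        + lorγ c V * (c⁻¹ ^ 2 * V) * pdt f (Linv c V p) := by
  have h1 : HasDerivAt (fun u : ℝ => lorγ c V * (u + V * p.2.2.2)) (lorγ c V) p.1 := by
    simpa using ((hasDerivAt_id p.1).add_const (V * p.2.2.2)).const_mul (lorγ c V)
  have h4 : HasDerivAt (fun u : ℝ => lorγ c V * (p.2.2.2 + c⁻¹ ^ 2 * V * u))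
      (lorγ c V * (c⁻¹ ^ 2 * V)) p.1 := by
    have h := (((hasDerivAt_id p.1).const_mul (c⁻¹ ^ 2 * V)).const_add
      p.2.2.2).const_mul (lorγ c V)
    simp only [mul_one] at h
    exact h
  have hcurve : HasDerivAt (fun u : ℝ => Linv c V (u, p.2.1, p.2.2.1, p.2.2.2))
      (lorγ c V, (0:ℝ), (0:ℝ), lorγ c V * (c⁻¹ ^ 2 * V)) p.1 := by
    simp only [Linv]
    exact h1.prodMk ((hasDerivAt_const _ _).prodMk ((hasDerivAt_const _ _).prodMk h4))
  have h := (hf.hasFDerivAt.comp_hasDerivAt p.1 hcurve).deriv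
  have h' : pdx (fun r => f (Linv c V r)) p
      = fderiv ℝ f (Linv c V p) (lorγ c V, 0, 0, lorγ c V * (c⁻¹ ^ 2 * V)) := by
    simpa [pdx, Function.comp_def] using h
  rw [h', fderiv_vec, ← pdx_fderiv hf, ← pdt_fderiv hf]

lemma pdy_comp (c V : ℝ) (f : Pt4 → ℝ) (p : Pt4)
    (hf : DifferentiableAt ℝ f (Linv c V p)) :
    pdy (fun r => f (Linv c V r)) p = pdy f (Linv c V p) := by
  have hcurve : HasDerivAt (fun u : ℝ => Linv c V (p.1, u, p.2.2.1, p.2.2.2))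
      ((0:ℝ), (1:ℝ), (0:ℝ), (0:ℝ)) p.2.1 := by
    simp only [Linv]
    exact (hasDerivAt_const _ _).prodMk ((hasDerivAt_id _).prodMk
      ((hasDerivAt_const _ _).prodMk (hasDerivAt_const _ _)))
  have h := (hf.hasFDerivAt.comp_hasDerivAt p.2.1 hcurve).deriv
  have h' : pdy (fun r => f (Linv c V r)) p
      = fderiv ℝ f (Linv c V p) (0, 1, 0, 0) := by
    simpa [pdy, Function.comp_def] using h
  rw [h', ← pdy_fderiv hf]

lemma pdz_comp (c V : ℝ) (f : Pt4 → ℝ) (p : Pt4)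
    (hf : DifferentiableAt ℝ f (Linv c V p)) :
    pdz (fun r => f (Linv c V r)) p = pdz f (Linv c V p) := by
  have hcurve : HasDerivAt (fun u : ℝ => Linv c V (p.1, p.2.1, u, p.2.2.2))
      ((0:ℝ), (0:ℝ), (1:ℝ), (0:ℝ)) p.2.2.1 := by
    simp only [Linv]
    exact (hasDerivAt_const _ _).prodMk ((hasDerivAt_const _ _).prodMk
      ((hasDerivAt_id _).prodMk (hasDerivAt_const _ _)))
  have h := (hf.hasFDerivAt.comp_hasDerivAt p.2.2.1 hcurve).deriv
  have h' : pdz (fun r => f (Linv c V r)) p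
      = fderiv ℝ f (Linv c V p) (0, 0, 1, 0) := by
    simpa [pdz, Function.comp_def] using h
  rw [h', ← pdz_fderiv hf]

lemma pdt_comp (c V : ℝ) (f : Pt4 → ℝ) (p : Pt4)
    (hf : DifferentiableAt ℝ f (Linv c V p)) :
    pdt (fun r => f (Linv c V r)) p =
      lorγ c V * V * pdx f (Linv c V p) + lorγ c V * pdt f (Linv c V p) := by
  have h1 : HasDerivAt (fun u : ℝ => lorγ c V * (p.1 + V * u)) (lorγ c V * V) p.2.2.2 := by
    simpa using
      (((hasDerivAt_id p.2.2.2).const_mul V).const_add p.1).const_mul (lorγ c V)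
  have h4 : HasDerivAt (fun u : ℝ => lorγ c V * (u + c⁻¹ ^ 2 * V * p.1))
      (lorγ c V) p.2.2.2 := by
    have h := ((hasDerivAt_id p.2.2.2).add_const (c⁻¹ ^ 2 * V * p.1)).const_mul (lorγ c V)
    simp only [mul_one, id] at h
    exact h
  have hcurve : HasDerivAt (fun u : ℝ => Linv c V (p.1, p.2.1, p.2.2.1, u))
      (lorγ c V * V, (0:ℝ), (0:ℝ), lorγ c V) p.2.2.2 := by
    simp only [Linv]
    exact h1.prodMk ((hasDerivAt_const _ _).prodMk ((hasDerivAt_const _ _).prodMk h4))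
  have h := (hf.hasFDerivAt.comp_hasDerivAt p.2.2.2 hcurve).deriv
  have h' : pdt (fun r => f (Linv c V r)) p
      = fderiv ℝ f (Linv c V p) (lorγ c V * V, 0, 0, lorγ c V) := by
    simpa [pdt, Function.comp_def] using h
  rw [h', fderiv_vec, ← pdx_fderiv hf, ← pdt_fderiv hf]

lemma fderiv_combo_add (a b : ℝ) {f h : Pt4 → ℝ} {q : Pt4}
    (hf : DifferentiableAt ℝ f q) (hh : DifferentiableAt ℝ h q) (v : Pt4) :
    fderiv ℝ (fun r => a * (f r + b * h r)) q v
      = a * (fderiv ℝ f q v + b * fderiv ℝ h q v) := by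
  have h1 : DifferentiableAt ℝ (fun r => b * h r) q := hh.const_mul b
  rw [fderiv_const_mul (hf.fun_add h1) a, fderiv_fun_add hf h1, fderiv_const_mul hh b]
  simp [mul_add, mul_sub]

lemma fderiv_combo_sub (a b : ℝ) {f h : Pt4 → ℝ} {q : Pt4}
    (hf : DifferentiableAt ℝ f q) (hh : DifferentiableAt ℝ h q) (v : Pt4) :
    fderiv ℝ (fun r => a * (f r - b * h r)) q v
      = a * (fderiv ℝ f q v - b * fderiv ℝ h q v) := by
  have h1 : DifferentiableAt ℝ (fun r => b * h r) q := hh.const_mul b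
  rw [fderiv_const_mul (hf.fun_sub h1) a, fderiv_fun_sub hf h1, fderiv_const_mul hh b]
  simp [mul_add, mul_sub]

lemma pdx_combo_add (a b : ℝ) {f h : Pt4 → ℝ} {q : Pt4}
    (hf : DifferentiableAt ℝ f q) (hh : DifferentiableAt ℝ h q) :
    pdx (fun r => a * (f r + b * h r)) q = a * (pdx f q + b * pdx h q) := by
  rw [pdx_fderiv ((hf.fun_add (hh.const_mul b)).const_mul a),
    fderiv_combo_add a b hf hh, pdx_fderiv hf, pdx_fderiv hh]

lemma pdx_combo_sub (a b : ℝ) {f h : Pt4 → ℝ} {q : Pt4}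
    (hf : DifferentiableAt ℝ f q) (hh : DifferentiableAt ℝ h q) :
    pdx (fun r => a * (f r - b * h r)) q = a * (pdx f q - b * pdx h q) := by
  rw [pdx_fderiv ((hf.fun_sub (hh.const_mul b)).const_mul a),
    fderiv_combo_sub a b hf hh, pdx_fderiv hf, pdx_fderiv hh]

lemma pdy_combo_add (a b : ℝ) {f h : Pt4 → ℝ} {q : Pt4}
    (hf : DifferentiableAt ℝ f q) (hh : DifferentiableAt ℝ h q) :
    pdy (fun r => a * (f r + b * h r)) q = a * (pdy f q + b * pdy h q) := by
  rw [pdy_fderiv ((hf.fun_add (hh.const_mul b)).const_mul a),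
    fderiv_combo_add a b hf hh, pdy_fderiv hf, pdy_fderiv hh]

lemma pdy_combo_sub (a b : ℝ) {f h : Pt4 → ℝ} {q : Pt4}
    (hf : DifferentiableAt ℝ f q) (hh : DifferentiableAt ℝ h q) :
    pdy (fun r => a * (f r - b * h r)) q = a * (pdy f q - b * pdy h q) := by
  rw [pdy_fderiv ((hf.fun_sub (hh.const_mul b)).const_mul a),
    fderiv_combo_sub a b hf hh, pdy_fderiv hf, pdy_fderiv hh]

lemma pdz_combo_add (a b : ℝ) {f h : Pt4 → ℝ} {q : Pt4}
    (hf : DifferentiableAt ℝ f q) (hh : DifferentiableAt ℝ h q) :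
    pdz (fun r => a * (f r + b * h r)) q = a * (pdz f q + b * pdz h q) := by
  rw [pdz_fderiv ((hf.fun_add (hh.const_mul b)).const_mul a),
    fderiv_combo_add a b hf hh, pdz_fderiv hf, pdz_fderiv hh]

lemma pdz_combo_sub (a b : ℝ) {f h : Pt4 → ℝ} {q : Pt4}
    (hf : DifferentiableAt ℝ f q) (hh : DifferentiableAt ℝ h q) :
    pdz (fun r => a * (f r - b * h r)) q = a * (pdz f q - b * pdz h q) := by
  rw [pdz_fderiv ((hf.fun_sub (hh.const_mul b)).const_mul a),
    fderiv_combo_sub a b hf hh, pdz_fderiv hf, pdz_fderiv hh]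

lemma pdt_combo_add (a b : ℝ) {f h : Pt4 → ℝ} {q : Pt4}
    (hf : DifferentiableAt ℝ f q) (hh : DifferentiableAt ℝ h q) :
    pdt (fun r => a * (f r + b * h r)) q = a * (pdt f q + b * pdt h q) := by
  rw [pdt_fderiv ((hf.fun_add (hh.const_mul b)).const_mul a),
    fderiv_combo_add a b hf hh, pdt_fderiv hf, pdt_fderiv hh]

lemma pdt_combo_sub (a b : ℝ) {f h : Pt4 → ℝ} {q : Pt4}
    (hf : DifferentiableAt ℝ f q) (hh : DifferentiableAt ℝ h q) :
    pdt (fun r => a * (f r - b * h r)) q = a * (pdt f q - b * pdt h q) := by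
  rw [pdt_fderiv ((hf.fun_sub (hh.const_mul b)).const_mul a),
    fderiv_combo_sub a b hf hh, pdt_fderiv hf, pdt_fderiv hh]

end AuxLemmas

/-- **Covariance of the homogeneous Maxwell equations.** If `∇·B = 0` and
`∇×E + ∂ₜB = 0` everywhere, then the boosted fields satisfy `∇·B' = 0` and
`∇×E' + ∂ₜB' = 0` everywhere (derivatives in the primed coordinates). -/
theorem homogeneous_maxwell_covariance (c V : ℝ) (hc : 0 < c) (hV : |V| < c)
    (E B : Pt4 → Vec3) (hE : ContDiff ℝ 1 E) (hB : ContDiff ℝ 1 B)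
    (hdivB : ∀ p : Pt4, vdiv B p = 0)
    (hFaraday : ∀ p : Pt4, vcurl E p + vdt B p = 0) :
    (∀ p : Pt4, vdiv (Bboost c V E B) p = 0) ∧
      (∀ p : Pt4, vcurl (Eboost c V E B) p + vdt (Bboost c V E B) p = 0) := by
  have hdE : Differentiable ℝ E := hE.differentiable one_ne_zero
  have hdB : Differentiable ℝ B := hB.differentiable one_ne_zero
  have hE1 : Differentiable ℝ (comp1 E) := hdE.fst
  have hE2 : Differentiable ℝ (comp2 E) := hdE.snd.fst
  have hE3 : Differentiable ℝ (comp3 E) := hdE.snd.snd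
  have hB1 : Differentiable ℝ (comp1 B) := hdB.fst
  have hB2 : Differentiable ℝ (comp2 B) := hdB.snd.fst
  have hB3 : Differentiable ℝ (comp3 B) := hdB.snd.snd
  have h1 : (0:ℝ) < 1 - V ^ 2 / c ^ 2 := by
    rw [sub_pos, div_lt_one (by positivity)]
    have h := abs_lt.mp hV
    nlinarith [h.1, h.2]
  have h2 : lorγ c V ^ 2 = (1 - V ^ 2 / c ^ 2)⁻¹ := by
    rw [lorγ, div_pow, one_pow, Real.sq_sqrt h1.le, one_div]
  have hγ : lorγ c V ^ 2 * (1 - c⁻¹ ^ 2 * V * V) = 1 := by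
    have h3 : (1:ℝ) - c⁻¹ ^ 2 * V * V = 1 - V ^ 2 / c ^ 2 := by
      rw [inv_pow]; ring
    rw [h2, h3, inv_mul_cancel₀ h1.ne']
  -- differentiability of the combination fields
  have hFE2 : Differentiable ℝ (fun r => lorγ c V * (comp2 E r - V * comp3 B r)) :=
    ((hE2.sub (hB3.const_mul V)).const_mul (lorγ c V))
  have hFE3 : Differentiable ℝ (fun r => lorγ c V * (comp3 E r + V * comp2 B r)) :=
    ((hE3.add (hB2.const_mul V)).const_mul (lorγ c V))
  have hFB2 : Differentiable ℝ (fun r => lorγ c V * (comp2 B r + c⁻¹ ^ 2 * V * comp3 E r)) :=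
    ((hB2.add (hE3.const_mul (c⁻¹ ^ 2 * V))).const_mul (lorγ c V))
  have hFB3 : Differentiable ℝ (fun r => lorγ c V * (comp3 B r - c⁻¹ ^ 2 * V * comp2 E r)) :=
    ((hB3.sub (hE2.const_mul (c⁻¹ ^ 2 * V))).const_mul (lorγ c V))
  constructor
  · intro p
    have hdiv := hdivB (Linv c V p)
    have hfar := hFaraday (Linv c V p)
    simp only [vdiv] at hdiv
    simp only [vcurl, vdt, Prod.mk_add_mk, Prod.ext_iff, Prod.fst_zero, Prod.snd_zero] at hfar
    obtain ⟨hf1, hf2, hf3⟩ := hfar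
    have d1 : pdx (comp1 (Bboost c V E B)) p
        = lorγ c V * pdx (comp1 B) (Linv c V p)
          + lorγ c V * (c⁻¹ ^ 2 * V) * pdt (comp1 B) (Linv c V p) :=
      pdx_comp c V (comp1 B) p (hB1 _)
    have d2 : pdy (comp2 (Bboost c V E B)) p
        = pdy (fun r => lorγ c V * (comp2 B r + c⁻¹ ^ 2 * V * comp3 E r)) (Linv c V p) :=
      pdy_comp c V _ p (hFB2 _)
    have d2' : pdy (fun r => lorγ c V * (comp2 B r + c⁻¹ ^ 2 * V * comp3 E r)) (Linv c V p)
        = lorγ c V * (pdy (comp2 B) (Linv c V p)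
            + c⁻¹ ^ 2 * V * pdy (comp3 E) (Linv c V p)) :=
      pdy_combo_add _ _ (hB2 _) (hE3 _)
    have d3 : pdz (comp3 (Bboost c V E B)) p
        = pdz (fun r => lorγ c V * (comp3 B r - c⁻¹ ^ 2 * V * comp2 E r)) (Linv c V p) :=
      pdz_comp c V _ p (hFB3 _)
    have d3' : pdz (fun r => lorγ c V * (comp3 B r - c⁻¹ ^ 2 * V * comp2 E r)) (Linv c V p)
        = lorγ c V * (pdz (comp3 B) (Linv c V p)
            - c⁻¹ ^ 2 * V * pdz (comp2 E) (Linv c V p)) :=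
      pdz_combo_sub _ _ (hB3 _) (hE2 _)
    simp only [vdiv]
    rw [d1, d2, d2', d3, d3']
    linear_combination lorγ c V * hdiv + lorγ c V * (c⁻¹ ^ 2 * V) * hf1
  · intro p
    have hdiv := hdivB (Linv c V p)
    have hfar := hFaraday (Linv c V p)
    simp only [vdiv] at hdiv
    simp only [vcurl, vdt, Prod.mk_add_mk, Prod.ext_iff, Prod.fst_zero, Prod.snd_zero] at hfar
    obtain ⟨hf1, hf2, hf3⟩ := hfar
    have hsplit : ∀ a b d : ℝ, ((a, b, d) : Vec3) = 0 ↔ a = 0 ∧ b = 0 ∧ d = 0 := by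
      intro a b d; simp [Prod.ext_iff]
    simp only [vcurl, vdt, Prod.mk_add_mk]
    rw [hsplit]
    refine ⟨?_, ?_, ?_⟩
    · -- first component
      have e3y : pdy (comp3 (Eboost c V E B)) p
          = pdy (fun r => lorγ c V * (comp3 E r + V * comp2 B r)) (Linv c V p) :=
        pdy_comp c V _ p (hFE3 _)
      have e3y' : pdy (fun r => lorγ c V * (comp3 E r + V * comp2 B r)) (Linv c V p)
          = lorγ c V * (pdy (comp3 E) (Linv c V p) + V * pdy (comp2 B) (Linv c V p)) :=
        pdy_combo_add _ _ (hE3 _) (hB2 _)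
      have e2z : pdz (comp2 (Eboost c V E B)) p
          = pdz (fun r => lorγ c V * (comp2 E r - V * comp3 B r)) (Linv c V p) :=
        pdz_comp c V _ p (hFE2 _)
      have e2z' : pdz (fun r => lorγ c V * (comp2 E r - V * comp3 B r)) (Linv c V p)
          = lorγ c V * (pdz (comp2 E) (Linv c V p) - V * pdz (comp3 B) (Linv c V p)) :=
        pdz_combo_sub _ _ (hE2 _) (hB3 _)
      have b1t : pdt (comp1 (Bboost c V E B)) p
          = lorγ c V * V * pdx (comp1 B) (Linv c V p)
            + lorγ c V * pdt (comp1 B) (Linv c V p) :=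
        pdt_comp c V (comp1 B) p (hB1 _)
      rw [e3y, e3y', e2z, e2z', b1t]
      linear_combination lorγ c V * hf1 + lorγ c V * V * hdiv
    · -- second component
      have e1z : pdz (comp1 (Eboost c V E B)) p = pdz (comp1 E) (Linv c V p) :=
        pdz_comp c V (comp1 E) p (hE1 _)
      have e3x : pdx (comp3 (Eboost c V E B)) p
          = lorγ c V * pdx (fun r => lorγ c V * (comp3 E r + V * comp2 B r)) (Linv c V p)
            + lorγ c V * (c⁻¹ ^ 2 * V)
              * pdt (fun r => lorγ c V * (comp3 E r + V * comp2 B r)) (Linv c V p) :=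
        pdx_comp c V _ p (hFE3 _)
      have e3x' : pdx (fun r => lorγ c V * (comp3 E r + V * comp2 B r)) (Linv c V p)
          = lorγ c V * (pdx (comp3 E) (Linv c V p) + V * pdx (comp2 B) (Linv c V p)) :=
        pdx_combo_add _ _ (hE3 _) (hB2 _)
      have e3t' : pdt (fun r => lorγ c V * (comp3 E r + V * comp2 B r)) (Linv c V p)
          = lorγ c V * (pdt (comp3 E) (Linv c V p) + V * pdt (comp2 B) (Linv c V p)) :=
        pdt_combo_add _ _ (hE3 _) (hB2 _)
      have b2t : pdt (comp2 (Bboost c V E B)) p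
          = lorγ c V * V
              * pdx (fun r => lorγ c V * (comp2 B r + c⁻¹ ^ 2 * V * comp3 E r)) (Linv c V p)
            + lorγ c V
              * pdt (fun r => lorγ c V * (comp2 B r + c⁻¹ ^ 2 * V * comp3 E r)) (Linv c V p) :=
        pdt_comp c V _ p (hFB2 _)
      have b2x' : pdx (fun r => lorγ c V * (comp2 B r + c⁻¹ ^ 2 * V * comp3 E r)) (Linv c V p)
          = lorγ c V * (pdx (comp2 B) (Linv c V p)
              + c⁻¹ ^ 2 * V * pdx (comp3 E) (Linv c V p)) :=
        pdx_combo_add _ _ (hB2 _) (hE3 _)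
      have b2t' : pdt (fun r => lorγ c V * (comp2 B r + c⁻¹ ^ 2 * V * comp3 E r)) (Linv c V p)
          = lorγ c V * (pdt (comp2 B) (Linv c V p)
              + c⁻¹ ^ 2 * V * pdt (comp3 E) (Linv c V p)) :=
        pdt_combo_add _ _ (hB2 _) (hE3 _)
      rw [e1z, e3x, e3x', e3t', b2t, b2x', b2t']
      linear_combination hf2
        + (pdt (comp2 B) (Linv c V p) - pdx (comp3 E) (Linv c V p)) * hγ
    · -- third component
      have e2x : pdx (comp2 (Eboost c V E B)) p
          = lorγ c V * pdx (fun r => lorγ c V * (comp2 E r - V * comp3 B r)) (Linv c V p)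
            + lorγ c V * (c⁻¹ ^ 2 * V)
              * pdt (fun r => lorγ c V * (comp2 E r - V * comp3 B r)) (Linv c V p) :=
        pdx_comp c V _ p (hFE2 _)
      have e2x' : pdx (fun r => lorγ c V * (comp2 E r - V * comp3 B r)) (Linv c V p)
          = lorγ c V * (pdx (comp2 E) (Linv c V p) - V * pdx (comp3 B) (Linv c V p)) :=
        pdx_combo_sub _ _ (hE2 _) (hB3 _)
      have e2t' : pdt (fun r => lorγ c V * (comp2 E r - V * comp3 B r)) (Linv c V p)
          = lorγ c V * (pdt (comp2 E) (Linv c V p) - V * pdt (comp3 B) (Linv c V p)) :=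
        pdt_combo_sub _ _ (hE2 _) (hB3 _)
      have e1y : pdy (comp1 (Eboost c V E B)) p = pdy (comp1 E) (Linv c V p) :=
        pdy_comp c V (comp1 E) p (hE1 _)
      have b3t : pdt (comp3 (Bboost c V E B)) p
          = lorγ c V * V
              * pdx (fun r => lorγ c V * (comp3 B r - c⁻¹ ^ 2 * V * comp2 E r)) (Linv c V p)
            + lorγ c V
              * pdt (fun r => lorγ c V * (comp3 B r - c⁻¹ ^ 2 * V * comp2 E r)) (Linv c V p) :=
        pdt_comp c V _ p (hFB3 _)
      have b3x' : pdx (fun r => lorγ c V * (comp3 B r - c⁻¹ ^ 2 * V * comp2 E r)) (Linv c V p)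
          = lorγ c V * (pdx (comp3 B) (Linv c V p)
              - c⁻¹ ^ 2 * V * pdx (comp2 E) (Linv c V p)) :=
        pdx_combo_sub _ _ (hB3 _) (hE2 _)
      have b3t' : pdt (fun r => lorγ c V * (comp3 B r - c⁻¹ ^ 2 * V * comp2 E r)) (Linv c V p)
          = lorγ c V * (pdt (comp3 B) (Linv c V p)
              - c⁻¹ ^ 2 * V * pdt (comp2 E) (Linv c V p)) :=
        pdt_combo_sub _ _ (hB3 _) (hE2 _)
      rw [e2x, e2x', e2t', e1y, b3t, b3x', b3t']
      linear_combination hf3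
        + (pdx (comp2 E) (Linv c V p) + pdt (comp3 B) (Linv c V p)) * hγ
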